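/- Let G be a group, H and M subgroups of G, T a subgroup of H, and γ ∈ G an element with γ^{-1} T γ ⊆ M. Set 𝓜 := (γ M γ^{-1}) ∩ H. Let N_H(T) = {h ∈ H : h T h^{-1} = T} and N_𝓜(T) = {m ∈ 𝓜 : m T m^{-1} = T}. Then for h, h' ∈ N_H(T) one has h γ M = h' γ M (equality of left cosets of M in G) if and only if h'^{-1} h ∈ N_𝓜(T). Consequently, if the index [N_H(T) : N_𝓜(T)] is finite, the image of the map N_H(T) → G/M, h ↦ hγM, has cardinality [N_H(T) : N_𝓜(T)]. -/

import Mathlib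

/-!
Left cosets `hγM` and `h'γM` agree exactly when `h'⁻¹h` lies in the conjugate `γMγ⁻¹`; for `h, h'`
in `N_H(T)` this is membership in `N_𝓜(T)`. So the map `h ↦ hγM` factors through an injection of
`N_H(T) / N_𝓜(T)` into `G / M`, whose image therefore has `[N_H(T) : N_𝓜(T)]` elements.
-/

namespace Subgroup

variable {G : Type*} [Group G]

theorem mem_map_conj_iff (M : Subgroup G) (g x : G) :
    x ∈ M.map (MulAut.conj g).toMonoidHom ↔ g⁻¹ * x * g ∈ M := by
  rw [mem_map_equiv, MulAut.conj_symm_apply]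

theorem natCard_image_eq_relIndex {X : Type*} (f : G → X) (K L : Subgroup G)
    (hf : ∀ a ∈ K, ∀ b ∈ K, f a = f b ↔ a⁻¹ * b ∈ L) :
    Nat.card (f '' K) = L.relIndex K := by
  have hker : ∀ a b : K, Setoid.ker (fun k : K => f k) a b ↔
      QuotientGroup.leftRel (L.subgroupOf K) a b := fun a b => by
    rw [Setoid.ker_def, QuotientGroup.leftRel_apply, mem_subgroupOf]
    exact hf a a.2 b b.2
  rw [Set.image_eq_range]
  exact Nat.card_congr ((Setoid.quotientKerEquivRange _).symm.trans (Quotient.congrRight hker))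

end Subgroup

namespace QuotientGroup

variable {G : Type*} [Group G]

theorem mk_mul_eq_mk_mul_iff (M : Subgroup G) (g a b : G) :
    (mk (a * g) : G ⧸ M) = mk (b * g) ↔ a⁻¹ * b ∈ M.map (MulAut.conj g).toMonoidHom := by
  rw [QuotientGroup.eq, Subgroup.mem_map_conj_iff]
  simp only [mul_inv_rev, mul_assoc]

theorem mk_mul_eq_mk_mul_iff_mem_inf (M : Subgroup G) (g : G) {K : Subgroup G} {a b : G}
    (ha : a ∈ K) (hb : b ∈ K) :
    (mk (a * g) : G ⧸ M) = mk (b * g) ↔ a⁻¹ * b ∈ M.map (MulAut.conj g).toMonoidHom ⊓ K := by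
  rw [mk_mul_eq_mk_mul_iff, Subgroup.mem_inf, and_iff_left (K.mul_mem (K.inv_mem ha) hb)]

end QuotientGroup

theorem coset_fibers_of_normalizers_general {G : Type*} [Group G] (H M T : Subgroup G) (γ : G) :
    (∀ h h', h ∈ H ⊓ Subgroup.normalizer (T : Set G) → h' ∈ H ⊓ Subgroup.normalizer (T : Set G) →
      ((QuotientGroup.mk (h * γ) : G ⧸ M) = QuotientGroup.mk (h' * γ) ↔
        h'⁻¹ * h ∈ (M.map (MulAut.conj γ).toMonoidHom ⊓ H) ⊓ Subgroup.normalizer (T : Set G))) ∧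
    ((M.map (MulAut.conj γ).toMonoidHom ⊓ H ⊓ Subgroup.normalizer (T : Set G)).relIndex
        (H ⊓ Subgroup.normalizer (T : Set G)) ≠ 0 →
      Nat.card ((fun h => (QuotientGroup.mk (h * γ) : G ⧸ M)) ''
          ((H ⊓ Subgroup.normalizer (T : Set G) : Subgroup G) : Set G)) =
        (M.map (MulAut.conj γ).toMonoidHom ⊓ H ⊓ Subgroup.normalizer (T : Set G)).relIndex
          (H ⊓ Subgroup.normalizer (T : Set G))) := by
  rw [inf_assoc]
  refine ⟨fun h h' hh hh' => ?_, fun _ => ?_⟩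
  · rw [eq_comm, QuotientGroup.mk_mul_eq_mk_mul_iff_mem_inf M γ hh' hh]
  · exact Subgroup.natCard_image_eq_relIndex _ _ _
      fun a ha b hb => QuotientGroup.mk_mul_eq_mk_mul_iff_mem_inf M γ ha hb

/-- Let `G` be a group, `H, M` subgroups, `T ≤ H` a subgroup and `γ ∈ G` with
`γ⁻¹ T γ ⊆ M`.  Set `𝓜 = (γ M γ⁻¹) ⊓ H`, `N_H(T) = H ⊓ N(T)` and
`N_𝓜(T) = 𝓜 ⊓ N(T)`.  Then for `h, h' ∈ N_H(T)` one has `hγM = h'γM` iff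
`h'⁻¹h ∈ N_𝓜(T)`; consequently if `[N_H(T) : N_𝓜(T)]` is finite, the image of
`N_H(T) → G/M`, `h ↦ hγM`, has cardinality `[N_H(T) : N_𝓜(T)]`. -/
theorem coset_fibers_of_normalizers {G : Type*} [Group G] (H M T : Subgroup G)
    (hTH : T ≤ H) (γ : G) (hγ : ∀ t ∈ T, γ⁻¹ * t * γ ∈ M) :
    (∀ h h', h ∈ H ⊓ Subgroup.normalizer (T : Set G) → h' ∈ H ⊓ Subgroup.normalizer (T : Set G) →
      ((QuotientGroup.mk (h * γ) : G ⧸ M) = QuotientGroup.mk (h' * γ) ↔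
        h'⁻¹ * h ∈ (M.map (MulAut.conj γ).toMonoidHom ⊓ H) ⊓ Subgroup.normalizer (T : Set G))) ∧
    ((M.map (MulAut.conj γ).toMonoidHom ⊓ H ⊓ Subgroup.normalizer (T : Set G)).relIndex
        (H ⊓ Subgroup.normalizer (T : Set G)) ≠ 0 →
      Nat.card ((fun h => (QuotientGroup.mk (h * γ) : G ⧸ M)) ''
          ((H ⊓ Subgroup.normalizer (T : Set G) : Subgroup G) : Set G)) =
        (M.map (MulAut.conj γ).toMonoidHom ⊓ H ⊓ Subgroup.normalizer (T : Set G)).relIndex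
          (H ⊓ Subgroup.normalizer (T : Set G))) :=
  coset_fibers_of_normalizers_general H M T γ
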